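/- Let R be a nearfield and let T = ⊕_{i=1}^ℓ u_i R ⊆ R^n be the direct sum generated by nonzero vectors u_1,…,u_ℓ with mutually disjoint supports. Then there exists a set D of simple vectors (weight 1 or 2) in R^n such that T = D^⊥ = { x : ⟨e,x⟩ = 0 for all e ∈ D }. -/

import Mathlib

open scoped BigOperators

/-- A (left) nearfield: a zero-symmetric (left) nearring whose nonzero
elements form a multiplicative group. The additive group is abelian. -/
class Nearfield (R : Type*) extends AddCommGroup R, One R, Mul R, Inv R where
  protected mul_assoc : ∀ a b c : R, a * b * c = a * (b * c)
  protected left_distrib : ∀ a b c : R, a * (b + c) = a * b + a * c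
  protected zero_mul : ∀ a : R, (0 : R) * a = 0
  protected mul_zero : ∀ a : R, a * (0 : R) = 0
  protected one_mul : ∀ a : R, (1 : R) * a = a
  protected mul_one : ∀ a : R, a * (1 : R) = a
  protected one_ne_zero : (1 : R) ≠ 0
  protected mul_inv_cancel : ∀ a : R, a ≠ 0 → a * a⁻¹ = 1
  protected inv_mul_cancel : ∀ a : R, a ≠ 0 → a⁻¹ * a = 1

namespace Nearfield

/-- A nearfield is proper if it is not a skewfield (right distributivity fails). -/
def IsProper (R : Type*) [Nearfield R] : Prop :=
  ∃ a b c : R, (a + b) * c ≠ a * c + b * c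

variable {R : Type*} [Nearfield R]

/-- Right scalar multiplication on `R^n`, applied coordinatewise. -/
def vsmul {n : ℕ} (v : Fin n → R) (r : R) : Fin n → R := fun i => v i * r

/-- An `R`-subgroup of `R^n`: an additive subgroup closed under right scalar
multiplication. -/
def IsRSubgroup {n : ℕ} (H : Set (Fin n → R)) : Prop :=
  (0 : Fin n → R) ∈ H ∧ (∀ x ∈ H, ∀ y ∈ H, x + y ∈ H) ∧
    (∀ x ∈ H, -x ∈ H) ∧ (∀ x ∈ H, ∀ r : R, vsmul x r ∈ H)

/-- `gen S` is the smallest `R`-subgroup containing `S`. -/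
def gen {n : ℕ} (S : Set (Fin n → R)) : Set (Fin n → R) :=
  ⋂₀ {H : Set (Fin n → R) | IsRSubgroup H ∧ S ⊆ H}

/-- The support of a vector. -/
def supp {n : ℕ} (u : Fin n → R) : Set (Fin n) := {i | u i ≠ 0}

/-- `dirSum u = { Σ_i u_i r_i : r_i ∈ R }`. -/
def dirSum {n ℓ : ℕ} (u : Fin ℓ → Fin n → R) : Set (Fin n → R) :=
  {v | ∃ r : Fin ℓ → R, v = ∑ i, vsmul (u i) (r i)}

/-- The "scalar product" `⟨x,y⟩ = Σ_i x_i·y_i`. -/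
def dot {n : ℕ} (x y : Fin n → R) : R := ∑ i, x i * y i

/-- The weight of a vector: the number of its nonzero coordinates. -/
noncomputable def weight {n : ℕ} (u : Fin n → R) : ℕ := (supp u).ncard

/-- A vector is simple if it has weight one or two. -/
def IsSimple {n : ℕ} (u : Fin n → R) : Prop := weight u = 1 ∨ weight u = 2

/-- The orthogonal set `D^⊥`. -/
def perp {n : ℕ} (D : Set (Fin n → R)) : Set (Fin n → R) :=
  {x | ∀ e ∈ D, dot e x = 0}

/-- `c(k,R)`: nonzero vectors of `R^k` whose first nonzero coordinate is `1`. -/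
def cSet (R : Type*) [Nearfield R] (k : ℕ) : Set (Fin k → R) :=
  {u | ∃ i : Fin k, u i = 1 ∧ ∀ j : Fin k, j < i → u j = 0}

/-- The seed number of `T`: the least size of a set generating `T`. -/
noncomputable def seed {n : ℕ} (T : Set (Fin n → R)) : ℕ :=
  sInf {k | ∃ S : Finset (Fin n → R), S.card = k ∧ gen (↑S : Set (Fin n → R)) = T}

/-- Iterated linear-combination closures. -/
def LC {n : ℕ} (S : Set (Fin n → R)) : ℕ → Set (Fin n → R)
  | 0 => S
  | m + 1 => {v | ∃ (ℓ : ℕ) (w : Fin ℓ → Fin n → R) (lam : Fin ℓ → R),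
      (∀ i, w i ∈ LC S m) ∧ v = ∑ i, vsmul (w i) (lam i)}

end Nearfield

/-- Stirling numbers of the second kind. -/
def stirling2 : ℕ → ℕ → ℕ
  | 0, 0 => 1
  | 0, _ + 1 => 0
  | _ + 1, 0 => 0
  | n + 1, k + 1 => (k + 1) * stirling2 n (k + 1) + stirling2 n k

open Nearfield

/-!
Choose a pivot `p i` in each support `supp (u i)`. Because the supports are disjoint, `x` lies in
`dirSum u` exactly when it vanishes outside all supports and, on `supp (u i)`, equals
`u i k * ((u i (p i))⁻¹ * x (p i))`. Each of these conditions is one equation `dot e x = 0`, with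
`e` a unit vector or `e = e_k - (u i k * (u i (p i))⁻¹) e_{p i}`, a vector of weight two.
A nearfield is only left distributive, so evaluating the weight-two equations uses
`-a * b = -(a * b)`, which follows from `-1 * x = -x`.
-/

namespace Nearfield

variable {R : Type*} [Nearfield R]

-- Kept local so that `(0 : R)` outside this namespace still elaborates through `AddCommGroup`.
local instance : MonoidWithZero R where
  mul_assoc := Nearfield.mul_assoc
  one_mul := Nearfield.one_mul
  mul_one := Nearfield.mul_one
  zero_mul := Nearfield.zero_mul
  mul_zero := Nearfield.mul_zero

local instance : LeftDistribClass R := ⟨Nearfield.left_distrib⟩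

local instance : IsCancelMulZero R where
  mul_left_cancel_of_ne_zero {a} ha b c h := by
    simpa [← mul_assoc, Nearfield.inv_mul_cancel a ha] using congrArg (a⁻¹ * ·) h
  mul_right_cancel_of_ne_zero {a} ha b c h := by
    simpa [mul_assoc, Nearfield.mul_inv_cancel a ha] using congrArg (· * a⁻¹) h

protected theorem inv_ne_zero {a : R} (ha : a ≠ 0) : a⁻¹ ≠ 0 := by
  intro h
  have h1 := Nearfield.mul_inv_cancel a ha
  rw [h, mul_zero] at h1
  exact Nearfield.one_ne_zero h1.symm

protected theorem mul_inv_cancel_left {a : R} (ha : a ≠ 0) (b : R) : a * (a⁻¹ * b) = b := by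
  rw [← mul_assoc, Nearfield.mul_inv_cancel a ha, one_mul]

protected theorem inv_mul_cancel_left {a : R} (ha : a ≠ 0) (b : R) : a⁻¹ * (a * b) = b := by
  rw [← mul_assoc, Nearfield.inv_mul_cancel a ha, one_mul]

protected theorem mul_neg (a b : R) : a * -b = -(a * b) :=
  eq_neg_of_add_eq_zero_left <| by rw [← mul_add, neg_add_cancel, mul_zero]

protected theorem neg_one_mul (x : R) : -1 * x = -x := by
  by_cases h : (-1 : R) = 1
  · calc -1 * x = x * -1 := by rw [h, one_mul, mul_one]
      _ = -x := by rw [Nearfield.mul_neg, mul_one]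
  -- `y = -1 * x + x` is fixed by left multiplication with `-1`, so it vanishes unless `-1 = 1`.
  · refine eq_neg_of_add_eq_zero_left (by_contra fun hy => h (mul_right_cancel₀ hy ?_))
    rw [one_mul, mul_add, ← mul_assoc, Nearfield.mul_neg, mul_one, neg_neg, one_mul, add_comm]

protected theorem neg_mul (a b : R) : -a * b = -(a * b) :=
  calc -a * b = a * -1 * b := by rw [Nearfield.mul_neg, mul_one]
    _ = -(a * b) := by rw [mul_assoc, Nearfield.neg_one_mul, Nearfield.mul_neg]

local instance : HasDistribNeg R where
  neg_mul := Nearfield.neg_mul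
  mul_neg := Nearfield.mul_neg

variable {n : ℕ}

theorem dot_single (k : Fin n) (a : R) (x : Fin n → R) : dot (Pi.single k a) x = a * x k := by
  simp [dot, Pi.single_apply]

theorem dot_single_add_single {k p : Fin n} (hkp : k ≠ p) (a b : R) (x : Fin n → R) :
    dot (Pi.single k a + Pi.single p b : Fin n → R) x = a * x k + b * x p := by
  rw [dot, Finset.sum_eq_add k p hkp]
  · simp [hkp, hkp.symm]
  · intro m _ hm
    simp [hm.1, hm.2]
  all_goals simp

theorem supp_single (k : Fin n) {a : R} (ha : a ≠ 0) : supp (Pi.single k a) = {k} := by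
  ext m
  by_cases hm : m = k <;> simp [supp, hm, ha]

theorem supp_single_add_single {k p : Fin n} (hkp : k ≠ p) {a b : R} (ha : a ≠ 0) (hb : b ≠ 0) :
    supp (Pi.single k a + Pi.single p b : Fin n → R) = {k, p} := by
  ext m
  by_cases hmk : m = k
  · simp [supp, hmk, hkp, ha]
  · by_cases hmp : m = p <;> simp [supp, hmk, hmp, hkp.symm, hb]

theorem isSimple_single (k : Fin n) {a : R} (ha : a ≠ 0) : IsSimple (Pi.single k a) :=
  Or.inl <| by rw [weight, supp_single k ha, Set.ncard_singleton]

theorem isSimple_single_add_single {k p : Fin n} (hkp : k ≠ p) {a b : R} (ha : a ≠ 0)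
    (hb : b ≠ 0) : IsSimple (Pi.single k a + Pi.single p b : Fin n → R) :=
  Or.inr <| by rw [weight, supp_single_add_single hkp ha hb, Set.ncard_pair hkp]

variable {ℓ : ℕ} {u : Fin ℓ → Fin n → R}

theorem sum_vsmul_apply_of_forall_eq_zero {k : Fin n} (hk : ∀ i, u i k = 0) (r : Fin ℓ → R) :
    (∑ i, vsmul (u i) (r i)) k = 0 := by
  simp [Finset.sum_apply, vsmul, hk]

theorem sum_vsmul_apply_of_mem_supp (hdisj : ∀ i j, i ≠ j → supp (u i) ∩ supp (u j) = ∅)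
    {i : Fin ℓ} {k : Fin n} (hk : k ∈ supp (u i)) (r : Fin ℓ → R) :
    (∑ j, vsmul (u j) (r j)) k = u i k * r i := by
  rw [Finset.sum_apply, Finset.sum_eq_single i]
  · rfl
  · intro j _ hji
    have hkj : u j k = 0 := by_contra fun hkj => (hdisj j i hji).subset ⟨hkj, hk⟩
    simp [vsmul, hkj]
  · simp

variable {p : Fin ℓ → Fin n}

theorem mem_dirSum_iff (hdisj : ∀ i j, i ≠ j → supp (u i) ∩ supp (u j) = ∅)
    (hp : ∀ i, p i ∈ supp (u i)) {x : Fin n → R} :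
    x ∈ dirSum u ↔ (∀ k, (∀ i, u i k = 0) → x k = 0) ∧
      ∀ i, ∀ k ∈ supp (u i), x k = u i k * ((u i (p i))⁻¹ * x (p i)) := by
  constructor
  · rintro ⟨r, rfl⟩
    refine ⟨fun k hk => sum_vsmul_apply_of_forall_eq_zero hk r, fun i k hk => ?_⟩
    rw [sum_vsmul_apply_of_mem_supp hdisj hk, sum_vsmul_apply_of_mem_supp hdisj (hp i),
      Nearfield.inv_mul_cancel_left (hp i)]
  · rintro ⟨hzero, hpivot⟩
    refine ⟨fun i => (u i (p i))⁻¹ * x (p i), funext fun k => ?_⟩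
    by_cases hk : ∀ i, u i k = 0
    · rw [sum_vsmul_apply_of_forall_eq_zero hk, hzero k hk]
    · obtain ⟨i, hk⟩ := not_forall.mp hk
      rw [sum_vsmul_apply_of_mem_supp hdisj hk, hpivot i k hk]

def pivotConstraints (u : Fin ℓ → Fin n → R) (p : Fin ℓ → Fin n) : Set (Fin n → R) :=
  {e | ∃ k, (∀ i, u i k = 0) ∧ e = Pi.single k 1} ∪
    {e | ∃ i, ∃ k ∈ supp (u i), k ≠ p i ∧
      e = Pi.single k 1 + Pi.single (p i) (-(u i k * (u i (p i))⁻¹))}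

theorem isSimple_of_mem_pivotConstraints (hp : ∀ i, p i ∈ supp (u i)) :
    ∀ e ∈ pivotConstraints u p, IsSimple e := by
  rintro e (⟨k, -, rfl⟩ | ⟨i, k, hk, hkp, rfl⟩)
  · exact isSimple_single k Nearfield.one_ne_zero
  · exact isSimple_single_add_single hkp Nearfield.one_ne_zero
      (neg_ne_zero.mpr (mul_ne_zero hk (Nearfield.inv_ne_zero (hp i))))

theorem mem_perp_pivotConstraints_iff (hp : ∀ i, p i ∈ supp (u i)) {x : Fin n → R} :
    x ∈ perp (pivotConstraints u p) ↔ (∀ k, (∀ i, u i k = 0) → x k = 0) ∧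
      ∀ i, ∀ k ∈ supp (u i), x k = u i k * ((u i (p i))⁻¹ * x (p i)) := by
  constructor
  · intro hx
    refine ⟨fun k hk => ?_, fun i k hk => ?_⟩
    · simpa [dot_single] using hx _ (Or.inl ⟨k, hk, rfl⟩)
    · by_cases hkp : k = p i
      · subst hkp
        rw [Nearfield.mul_inv_cancel_left (hp i)]
      · have hdot := hx _ (Or.inr ⟨i, k, hk, hkp, rfl⟩)
        rwa [dot_single_add_single hkp, one_mul, neg_mul, mul_assoc, ← sub_eq_add_neg,
          sub_eq_zero] at hdot
  · rintro ⟨hzero, hpivot⟩ e (⟨k, hk, rfl⟩ | ⟨i, k, hk, hkp, rfl⟩)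
    · rw [dot_single, one_mul, hzero k hk]
    · rw [dot_single_add_single hkp, one_mul, neg_mul, mul_assoc, ← hpivot i k hk,
        add_neg_cancel]

end Nearfield

/-- Every direct sum of nonzero vectors with mutually disjoint supports is the
orthogonal set of some set of simple vectors. -/
theorem dirSum_eq_perp_simple {R : Type*} [Nearfield R] {n ℓ : ℕ}
    (u : Fin ℓ → Fin n → R) (hne : ∀ i, u i ≠ 0)
    (hdisj : ∀ i j, i ≠ j → supp (u i) ∩ supp (u j) = ∅) :
    ∃ D : Set (Fin n → R), (∀ e ∈ D, IsSimple e) ∧ dirSum u = perp D := by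
  choose p hp using fun i => Function.ne_iff.mp (hne i)
  refine ⟨pivotConstraints u p, isSimple_of_mem_pivotConstraints hp, Set.ext fun x => ?_⟩
  rw [mem_dirSum_iff hdisj hp, mem_perp_pivotConstraints_iff hp]
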